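/- Let D be an integral domain whose complete integral closure D'' equals a localization D_S at a multiplicative subset S of D. Then D is completely integrally closed if and only if D is Archimedean. -/

import Mathlib

open scoped nonZeroDivisors

variable (D : Type*) [CommRing D] [IsDomain D]
variable (K : Type*) [Field K] [Algebra D K] [IsFractionRing D K]

/-- The complete integral closure of `D` inside `K`. -/
def completeIntegralClosureSet : Set K :=
  {x : K | ∃ r : D, r ≠ 0 ∧ ∀ n : ℕ, 1 ≤ n →
    ∃ d : D, algebraMap D K d = algebraMap D K r * x ^ n}

/-- `D` is completely integrally closed: `D = D''`. -/
def IsCompletelyIntegrallyClosed : Prop :=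
  ∀ x ∈ completeIntegralClosureSet D K, ∃ d : D, algebraMap D K d = x

/-- `D` is Archimedean: `⋂_{n ≥ 1} x^n D = (0)` for every nonunit `x ∈ D`. -/
def IsArchimedean : Prop :=
  ∀ x : D, ¬ IsUnit x → (⨅ (n : ℕ) (_ : 1 ≤ n), Ideal.span {x ^ n}) = ⊥

/-!
A nonzero `x ∈ D` has `x⁻¹ ∈ D''` exactly when some nonzero `r` lies in every `x^n D`, since
`r ∈ x^n D` means `r x⁻ⁿ ∈ D`. So `D` is Archimedean iff every nonzero `x ∈ D` with `x⁻¹ ∈ D''`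
is a unit. If `D = D''` this clearly holds. Conversely, if `D'' = D_S` and `D` is Archimedean,
then every `s ∈ S` has `s⁻¹ ∈ D_S = D''`, hence is a unit, so `D'' = D_S = D`.
-/

section

variable {D K}

omit [IsDomain D]

theorem mem_iInf_span_pow_iff {x : D} (hx : x ≠ 0) (r : D) :
    r ∈ (⨅ (n : ℕ) (_ : 1 ≤ n), Ideal.span {x ^ n}) ↔
      ∀ n : ℕ, 1 ≤ n → ∃ d : D, algebraMap D K d = algebraMap D K r * (algebraMap D K x)⁻¹ ^ n := by
  have hxK : algebraMap D K x ≠ 0 := (map_ne_zero_iff _ (IsFractionRing.injective D K)).2 hx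
  simp only [Ideal.mem_iInf, Ideal.mem_span_singleton']
  refine forall₂_congr fun n _ => exists_congr fun d => ?_
  rw [← (IsFractionRing.injective D K).eq_iff, map_mul, map_pow, inv_pow,
    eq_mul_inv_iff_mul_eq₀ (pow_ne_zero n hxK)]

theorem inv_mem_completeIntegralClosureSet_iff {x : D} (hx : x ≠ 0) :
    (algebraMap D K x)⁻¹ ∈ completeIntegralClosureSet D K ↔
      (⨅ (n : ℕ) (_ : 1 ≤ n), Ideal.span {x ^ n}) ≠ ⊥ := by
  simp only [Submodule.ne_bot_iff, mem_iInf_span_pow_iff (K := K) hx]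
  exact exists_congr fun r => and_comm

theorem isArchimedean_iff_isUnit_of_inv_mem :
    IsArchimedean D ↔
      ∀ x : D, x ≠ 0 → (algebraMap D K x)⁻¹ ∈ completeIntegralClosureSet D K → IsUnit x := by
  refine ⟨fun harch x hx hinv => ?_, fun h x hu => ?_⟩
  · by_contra hu
    exact (inv_mem_completeIntegralClosureSet_iff hx).1 hinv (harch x hu)
  · by_contra hne
    have hx : x ≠ 0 := by
      rintro rfl
      refine hne (eq_bot_iff.2 fun r hr => ?_)
      simpa using Ideal.mem_iInf.1 (Ideal.mem_iInf.1 hr 1) le_rfl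
    exact hu (h x hx ((inv_mem_completeIntegralClosureSet_iff hx).2 hne))

theorem isUnit_of_algebraMap_inv_eq {x d : D} (hx : x ≠ 0)
    (hd : algebraMap D K d = (algebraMap D K x)⁻¹) : IsUnit x := by
  have hxK : algebraMap D K x ≠ 0 := (map_ne_zero_iff _ (IsFractionRing.injective D K)).2 hx
  refine IsUnit.of_mul_eq_one d (IsFractionRing.injective D K ?_)
  rw [map_mul, hd, map_one, mul_inv_cancel₀ hxK]

end

/-- If the complete integral closure `D''` of `D` equals the localization `D_S` of `D`
at a multiplicative subset `S` of `D` (viewed inside the quotient field `K`), then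
`D` is completely integrally closed iff `D` is Archimedean. -/
theorem stmt_8 (S : Submonoid D) (hS0 : (0 : D) ∉ S)
    (hS : completeIntegralClosureSet D K =
      {x : K | ∃ d : D, ∃ s ∈ S, algebraMap D K s * x = algebraMap D K d}) :
    IsCompletelyIntegrallyClosed D K ↔ IsArchimedean D := by
  rw [isArchimedean_iff_isUnit_of_inv_mem (K := K)]
  refine ⟨fun hcic x hx hinv => ?_, fun harch x hx => ?_⟩
  · obtain ⟨d, hd⟩ := hcic _ hinv
    exact isUnit_of_algebraMap_inv_eq hx hd
  · obtain ⟨d, s, hs, hxs⟩ := hS ▸ hx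
    have hs0 : s ≠ 0 := fun h => hS0 (h ▸ hs)
    have hsK : algebraMap D K s ≠ 0 := (map_ne_zero_iff _ (IsFractionRing.injective D K)).2 hs0
    have hs_inv : (algebraMap D K s)⁻¹ ∈ completeIntegralClosureSet D K :=
      hS ▸ ⟨1, s, hs, by rw [mul_inv_cancel₀ hsK, map_one]⟩
    obtain ⟨u, rfl⟩ := harch s hs0 hs_inv
    refine ⟨↑u⁻¹ * d, ?_⟩
    rw [map_mul, ← hxs, ← mul_assoc, ← map_mul, Units.inv_mul, map_one, one_mul]
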